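/- For every n-partition λ of N and every n-composition ν of N, the quotient ring C^λ_ν = P_ν / I^λ_ν is a finite-dimensional ℂ-vector space. -/

import Mathlib

open MvPolynomial Finset

set_option synthInstance.maxHeartbeats 1000000
set_option maxHeartbeats 2000000

noncomputable section

/-- The elementary symmetric polynomial of degree `l` in the variables indexed by `S`. -/
def esymIn {σ : Type*} [DecidableEq σ] (S : Finset σ) (l : ℕ) : MvPolynomial σ ℂ :=
  ∑ T ∈ S.powersetCard l, ∏ a ∈ T, X a

/-- The complete homogeneous symmetric polynomial of degree `m` in the variables indexed
by `S`. -/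
def hsymIn {σ : Type*} [DecidableEq σ] (S : Finset σ) (m : ℕ) : MvPolynomial σ ℂ :=
  ∑ t ∈ S.sym m, (t.1.map X).prod

/-- Complete homogeneous symmetric polynomial with integer degree; zero in negative degree. -/
def hsymZ {σ : Type*} [DecidableEq σ] (S : Finset σ) (d : ℤ) : MvPolynomial σ ℂ :=
  if 0 ≤ d then hsymIn S d.toNat else 0

/-- The power sum symmetric polynomial of degree `j` in the variables indexed by `S`. -/
def psymIn {σ : Type*} (S : Finset σ) (j : ℕ) : MvPolynomial σ ℂ :=
  ∑ a ∈ S, X a ^ j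

variable (n N : ℕ)

/-- The partial sum `ν_0 + ⋯ + ν_{t−1}` of a composition `ν`. -/
def kpart (ν : Fin n → ℕ) (t : ℕ) : ℕ :=
  ∑ j ∈ Finset.univ.filter fun j : Fin n => (j : ℕ) < t, ν j

/-- The `i`-th block of variables `Ω_i = {a | k_{i−1} ≤ a < k_i}` (0-based). -/
def blockOf (ν : Fin n → ℕ) (i : Fin n) : Finset (Fin N) :=
  Finset.univ.filter fun a : Fin N =>
    kpart n ν (i : ℕ) ≤ (a : ℕ) ∧ (a : ℕ) < kpart n ν ((i : ℕ) + 1)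

/-- A permutation of the variables preserving each block of `ν`. -/
def BlockPreserving (ν : Fin n → ℕ) (σp : Equiv.Perm (Fin N)) : Prop :=
  ∀ i : Fin n, ∀ a ∈ blockOf n N ν i, σp a ∈ blockOf n N ν i

/-- `P_ν`: the subalgebra of polynomials invariant under the Young subgroup `S_ν`. -/
def Psub (ν : Fin n → ℕ) : Subalgebra ℂ (MvPolynomial (Fin N) ℂ) where
  carrier := {p | ∀ σp : Equiv.Perm (Fin N), BlockPreserving n N ν σp → rename σp p = p}
  mul_mem' := fun hp hq σp hσ => by rw [map_mul, hp σp hσ, hq σp hσ]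
  add_mem' := fun hp hq σp hσ => by rw [map_add, hp σp hσ, hq σp hσ]
  one_mem' := fun σp hσ => by simp
  zero_mem' := fun σp hσ => by simp
  algebraMap_mem' := fun c σp hσ => by simp [MvPolynomial.algebraMap_eq]

/-- The composition `ν − α_i` (for `i' = i+1`). -/
def subAlpha (ν : Fin n → ℕ) (i i' : Fin n) : Fin n → ℕ :=
  Function.update (Function.update ν i (ν i - 1)) i' (ν i' + 1)

/-- The composition `ν + α_i` (for `i' = i+1`). -/
def addAlpha (ν : Fin n → ℕ) (i i' : Fin n) : Fin n → ℕ :=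
  Function.update (Function.update ν i (ν i + 1)) i' (ν i' - 1)

/-- The variable `X_{k_i}` (the last variable of the `i`-th block), 0-based. -/
def varF [NeZero N] (ν : Fin n → ℕ) (i : Fin n) : Fin N :=
  Fin.ofNat N (kpart n ν ((i : ℕ) + 1) - 1 : ℕ)

/-- The variable `X_{k_i + 1}` (the first variable of the `(i+1)`-st block), 0-based. -/
def varE [NeZero N] (ν : Fin n → ℕ) (i : Fin n) : Fin N :=
  Fin.ofNat N (kpart n ν ((i : ℕ) + 1) : ℕ)

/-- The value of `F_{i,j}` on the basis element `X_{k_i}^m`: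
`Σ_{l=0}^{ν_i−1} (−1)^l e_l(ν−α_i;i) h_{m+j+ν_i−ν_{i+1}−1−l}(ν−α_i;i+1)`. -/
def Fval (ν : Fin n → ℕ) (i i' : Fin n) (j m : ℕ) : MvPolynomial (Fin N) ℂ :=
  ∑ l ∈ Finset.range (ν i),
    (-1 : MvPolynomial (Fin N) ℂ) ^ l * esymIn (blockOf n N (subAlpha n ν i i') i) l *
      hsymZ (blockOf n N (subAlpha n ν i i') i')
        ((m : ℤ) + (j : ℤ) + (ν i : ℤ) - (ν i' : ℤ) - 1 - (l : ℤ))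

/-- The value of `E_{i,j}` on the basis element `X_{k_i+1}^m`:
`Σ_{l=0}^{ν_{i+1}−1} (−1)^l e_l(ν+α_i;i+1) h_{m+j+ν_{i+1}−ν_i−1−l}(ν+α_i;i)`. -/
def Eval (ν : Fin n → ℕ) (i i' : Fin n) (j m : ℕ) : MvPolynomial (Fin N) ℂ :=
  ∑ l ∈ Finset.range (ν i'),
    (-1 : MvPolynomial (Fin N) ℂ) ^ l * esymIn (blockOf n N (addAlpha n ν i i') i') l *
      hsymZ (blockOf n N (addAlpha n ν i i') i)
        ((m : ℤ) + (j : ℤ) + (ν i' : ℤ) - (ν i : ℤ) - 1 - (l : ℤ))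

/-- `F` is (the restriction to `P_ν` of) the unique `P_{ν−α_i}`-linear map on
`P_{ν−α_i,ν}` sending the basis element `X_{k_i}^m` (`0 ≤ m ≤ ν_{i+1}`) to
`Σ_{l=0}^{ν_i−1} (−1)^l e_l(ν−α_i;i) h_{m+j+ν_i−ν_{i+1}−1−l}(ν−α_i;i+1)`;
when `ν_i = 0` the target is the zero ring and `F` is the zero map. -/
def FSpec [NeZero N] (ν : Fin n → ℕ) (i i' : Fin n) (j : ℕ)
    (F : MvPolynomial (Fin N) ℂ → MvPolynomial (Fin N) ℂ) : Prop :=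
  F 0 = 0 ∧
    (ν i = 0 → ∀ p ∈ Psub n N ν, F p = 0) ∧
    (0 < ν i → ∀ (p : MvPolynomial (Fin N) ℂ) (c : ℕ → MvPolynomial (Fin N) ℂ),
      p ∈ Psub n N ν → (∀ m, c m ∈ Psub n N (subAlpha n ν i i')) →
      p = ∑ m ∈ Finset.range (ν i' + 1), c m * X (varF n N ν i) ^ m →
      F p = ∑ m ∈ Finset.range (ν i' + 1), c m * Fval n N ν i i' j m)

/-- `E` is (the restriction to `P_ν` of) the unique `P_{ν+α_i}`-linear map on
`P_{ν+α_i,ν}` sending the basis element `X_{k_i+1}^m` (`0 ≤ m ≤ ν_{i+1}−1`) to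
`Σ_{l=0}^{ν_{i+1}−1} (−1)^l e_l(ν+α_i;i+1) h_{m+j+ν_{i+1}−ν_i−1−l}(ν+α_i;i)`;
when `ν_{i+1} = 0` the target is the zero ring and `E` is the zero map. -/
def ESpec [NeZero N] (ν : Fin n → ℕ) (i i' : Fin n) (j : ℕ)
    (E : MvPolynomial (Fin N) ℂ → MvPolynomial (Fin N) ℂ) : Prop :=
  E 0 = 0 ∧
    (ν i' = 0 → ∀ p ∈ Psub n N ν, E p = 0) ∧
    (0 < ν i' → ∀ (p : MvPolynomial (Fin N) ℂ) (c : ℕ → MvPolynomial (Fin N) ℂ),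
      p ∈ Psub n N ν → (∀ m, c m ∈ Psub n N (addAlpha n ν i i')) →
      p = ∑ m ∈ Finset.range (ν i'), c m * X (varE n N ν i) ^ m →
      E p = ∑ m ∈ Finset.range (ν i'), c m * Eval n N ν i i' j m)

/-- A family `(ν, i, j) ↦ F_{i,j} : P_ν → P_{ν−α_i}` of operators, each satisfying its
defining specification (at every `n`-composition of `N`). -/
def FFam [NeZero N]
    (Ff : (Fin n → ℕ) → Fin n → ℕ → MvPolynomial (Fin N) ℂ → MvPolynomial (Fin N) ℂ) : Prop :=
  ∀ (ν : Fin n → ℕ) (i : Fin n) (hi : (i : ℕ) + 1 < n) (j : ℕ),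
    Ff ν i j 0 = 0 ∧ ((∑ a, ν a) = N → FSpec n N ν i ⟨(i : ℕ) + 1, hi⟩ j (Ff ν i j))

/-- A family `(ν, i, j) ↦ E_{i,j} : P_ν → P_{ν+α_i}` of operators, each satisfying its
defining specification (at every `n`-composition of `N`). -/
def EFam [NeZero N]
    (Ef : (Fin n → ℕ) → Fin n → ℕ → MvPolynomial (Fin N) ℂ → MvPolynomial (Fin N) ℂ) : Prop :=
  ∀ (ν : Fin n → ℕ) (i : Fin n) (hi : (i : ℕ) + 1 < n) (j : ℕ),
    Ef ν i j 0 = 0 ∧ ((∑ a, ν a) = N → ESpec n N ν i ⟨(i : ℕ) + 1, hi⟩ j (Ef ν i j))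


/-- The generators `h_r(Ω_{i_1} ∪ … ∪ Ω_{i_m})`, for `1 ≤ i_1 < … < i_m ≤ n` and
`r > λ_1 + … + λ_m − ν_{i_1} − … − ν_{i_m}`, of the ideal `I^λ_ν ⊆ P_ν`. -/
def Igen (lam ν : Fin n → ℕ) : Set (MvPolynomial (Fin N) ℂ) :=
  {q | ∃ (T : Finset (Fin n)) (r : ℕ), T.Nonempty ∧
    (∑ k ∈ Finset.univ.filter fun k : Fin n => (k : ℕ) < T.card, lam k) < r + ∑ a ∈ T, ν a ∧
    q = hsymIn (T.biUnion fun a => blockOf n N ν a) r}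

/-- The ideal `I^λ_ν` of the ring `P_ν`. -/
def IdealI (lam ν : Fin n → ℕ) : Ideal (Psub n N ν) :=
  Ideal.span {x : Psub n N ν | (x : MvPolynomial (Fin N) ℂ) ∈ Igen n N lam ν}

/-!
Every symmetric polynomial is `S_ν`-invariant, and `ℂ[X_1, …, X_N]` is a finite module over the
subalgebra `Λ` generated by `e_1, …, e_N`, since each `X_a` is a root of `∏_b (T - X_b)`. As `Λ` is
Noetherian, its submodule `P_ν` is finitely generated over it. Modulo `I^λ_ν` every `e_k` with
`k ≥ 1` vanishes: taking all `n` blocks puts `h_r(X_1, …, X_N)` into `I^λ_ν` for `r ≥ 1`, and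
`∑_{i+j=k} (-1)^i e_i h_j = 0`. Hence `Λ` acts on `P_ν / I^λ_ν` through `ℂ`, and finitely many
generators of `P_ν` over `Λ` span the quotient over `ℂ`.
-/

section SymmetricFunctions

variable {τ : Type*} [DecidableEq τ]

lemma esymIn_zero (S : Finset τ) : esymIn S 0 = 1 := by
  simp [esymIn]

lemma hsymIn_zero (S : Finset τ) : hsymIn S 0 = 1 := by
  rw [hsymIn, sym_zero, sum_singleton]
  rfl

lemma esymIn_insert {a : τ} {S : Finset τ} (ha : a ∉ S) (l : ℕ) :
    esymIn (insert a S) (l + 1) = esymIn S (l + 1) + X a * esymIn S l := by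
  rw [esymIn, esymIn, esymIn, powersetCard_succ_insert ha, sum_union, sum_image, mul_sum]
  · congr 1
    refine sum_congr rfl fun U hU => prod_insert fun haU => ha ((mem_powersetCard.1 hU).1 haU)
  · intro U hU V hV hUV
    have hU' : a ∉ U := fun h => ha ((mem_powersetCard.1 hU).1 h)
    have hV' : a ∉ V := fun h => ha ((mem_powersetCard.1 hV).1 h)
    rw [← erase_insert hU', hUV, erase_insert hV']
  · refine disjoint_right.2 fun T hT hT' => ?_
    obtain ⟨U, -, rfl⟩ := mem_image.1 hT
    exact ha ((mem_powersetCard.1 hT').1 (mem_insert_self a U))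

lemma hsymIn_insert {a : τ} {S : Finset τ} (ha : a ∉ S) (m : ℕ) :
    hsymIn (insert a S) (m + 1) = hsymIn S (m + 1) + X a * hsymIn (insert a S) m := by
  have hfree : ((insert a S).sym (m + 1)).filter (a ∉ ·) = S.sym (m + 1) := by
    ext t
    simp only [mem_filter, mem_sym_iff, mem_insert]
    exact ⟨fun ⟨ht, hat⟩ b hb => (ht b hb).resolve_left (by rintro rfl; exact hat hb),
      fun ht => ⟨fun b hb => Or.inr (ht b hb), fun hat => ha (ht a hat)⟩⟩
  have hcontaining : ∑ t ∈ ((insert a S).sym (m + 1)).filter (a ∈ ·), (t.1.map X).prod =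
      X a * hsymIn (insert a S) m := by
    rw [hsymIn, mul_sum]
    refine sum_bij' (fun t ht => t.erase a (mem_filter.1 ht).2) (fun t _ => a ::ₛ t)
      (fun t ht => ?_) (fun t ht => ?_) (fun t ht => Sym.cons_erase _)
      (fun t _ => Sym.erase_cons_head t a _) (fun t ht => ?_)
    · obtain ⟨ht, hat⟩ := mem_filter.1 ht
      refine mem_sym_iff.2 fun b hb => mem_sym_iff.1 ht b ?_
      rw [← Sym.mem_coe, Sym.coe_erase hat] at hb
      exact Sym.mem_coe.1 (Multiset.mem_of_mem_erase hb)
    · refine mem_filter.2 ⟨mem_sym_iff.2 fun b hb => ?_, Sym.mem_cons_self a t⟩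
      rcases Sym.mem_cons.1 hb with rfl | hb
      exacts [mem_insert_self _ _, mem_sym_iff.1 ht b hb]
    · conv_lhs => rw [← Sym.cons_erase (mem_filter.1 ht).2]
      rw [Sym.val_eq_coe, Sym.coe_cons, Multiset.map_cons, Multiset.prod_cons]
      rfl
  rw [hsymIn, ← sum_filter_add_sum_filter_not _ (a ∈ ·), hcontaining, hfree, add_comm]
  rfl

lemma sum_antidiagonal_esymIn_insert {a : τ} {S : Finset τ} (ha : a ∉ S)
    (f : ℕ → MvPolynomial τ ℂ) (r : ℕ) :
    ∑ p ∈ antidiagonal (r + 1), (-1) ^ p.1 * esymIn (insert a S) p.1 * f p.2 =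
      ∑ p ∈ antidiagonal (r + 1), (-1) ^ p.1 * esymIn S p.1 * f p.2 -
        X a * ∑ p ∈ antidiagonal r, (-1) ^ p.1 * esymIn S p.1 * f p.2 := by
  have hterm : ∀ p ∈ antidiagonal r,
      (-1) ^ (p.1 + 1) * esymIn (insert a S) (p.1 + 1) * f p.2 =
        (-1) ^ (p.1 + 1) * esymIn S (p.1 + 1) * f p.2 - X a * ((-1) ^ p.1 * esymIn S p.1 * f p.2) :=
    fun p _ => by rw [esymIn_insert ha]; ring
  rw [Nat.sum_antidiagonal_succ, Nat.sum_antidiagonal_succ, sum_congr rfl hterm, sum_sub_distrib,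
    mul_sum, esymIn_zero, esymIn_zero]
  ring

lemma sum_antidiagonal_hsymIn_insert {a : τ} {S : Finset τ} (ha : a ∉ S)
    (g : ℕ → MvPolynomial τ ℂ) (r : ℕ) :
    ∑ p ∈ antidiagonal (r + 1), g p.1 * hsymIn (insert a S) p.2 =
      ∑ p ∈ antidiagonal (r + 1), g p.1 * hsymIn S p.2 +
        X a * ∑ p ∈ antidiagonal r, g p.1 * hsymIn (insert a S) p.2 := by
  have hterm : ∀ p ∈ antidiagonal r, g p.1 * hsymIn (insert a S) (p.2 + 1) =
      g p.1 * hsymIn S (p.2 + 1) + X a * (g p.1 * hsymIn (insert a S) p.2) :=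
    fun p _ => by rw [hsymIn_insert ha]; ring
  rw [Nat.sum_antidiagonal_succ', Nat.sum_antidiagonal_succ', sum_congr rfl hterm, sum_add_distrib,
    mul_sum, hsymIn_zero, hsymIn_zero]
  ring

/-- The coefficients of `E(-t) H(t) = 1`. -/
theorem sum_antidiagonal_esymIn_mul_hsymIn (S : Finset τ) {r : ℕ} (hr : 0 < r) :
    ∑ p ∈ antidiagonal r, (-1) ^ p.1 * esymIn S p.1 * hsymIn S p.2 = 0 := by
  obtain ⟨r, rfl⟩ : ∃ r', r = r' + 1 := ⟨r - 1, by omega⟩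
  induction S using Finset.induction_on with
  | empty =>
    have hempty (k : ℕ) : powersetCard (k + 1) (∅ : Finset τ) = ∅ :=
      powersetCard_eq_empty.2 (by simp)
    simp [Nat.sum_antidiagonal_succ, esymIn, hsymIn, hempty]
  | insert a S ha ih =>
    rw [sum_antidiagonal_esymIn_insert ha,
      sum_antidiagonal_hsymIn_insert ha (fun i => (-1) ^ i * esymIn S i), ih]
    ring

lemma esymIn_univ [Fintype τ] (k : ℕ) : esymIn (univ : Finset τ) k = esymm τ ℂ k :=
  rfl

lemma hsymIn_univ [Fintype τ] (m : ℕ) : hsymIn (univ : Finset τ) m = hsymm τ ℂ m := by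
  rw [hsymIn, sym_univ, hsymm]

end SymmetricFunctions

section EsymmSubalgebra

variable (σ K : Type*) [Fintype σ] [CommRing K]

def esymmSubalgebra : Subalgebra K (MvPolynomial σ K) :=
  Algebra.adjoin K (esymm σ K '' Set.Icc 1 (Fintype.card σ))

variable {σ K}

lemma esymm_mem_esymmSubalgebra {k : ℕ} (hk : k ≤ Fintype.card σ) :
    esymm σ K k ∈ esymmSubalgebra σ K := by
  rcases Nat.eq_zero_or_pos k with rfl | hk0
  · rw [esymm_zero]
    exact one_mem _
  · exact Algebra.subset_adjoin ⟨k, ⟨hk0, hk⟩, rfl⟩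

lemma isIntegral_X_esymmSubalgebra (i : σ) :
    IsIntegral (esymmSubalgebra σ K) (X i : MvPolynomial σ K) := by
  set s := univ.val.map (X : σ → MvPolynomial σ K)
  set p : Polynomial (MvPolynomial σ K) := (s.map fun t => Polynomial.X - Polynomial.C t).prod
    with hp
  have hmonic : p.Monic :=
    Polynomial.monic_multiset_prod_of_monic _ _ fun t _ => Polynomial.monic_X_sub_C t
  have hroot : p.eval (X i) = 0 := by
    rw [Polynomial.eval_multiset_prod]
    refine Multiset.prod_eq_zero (Multiset.mem_map.2 ⟨_, Multiset.mem_map_of_mem _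
      (Multiset.mem_map_of_mem _ (mem_univ_val i)), ?_⟩)
    simp
  have hcard : Multiset.card s = Fintype.card σ := by
    rw [Multiset.card_map, card_val, card_univ]
  have hlifts : p ∈ Polynomial.lifts (algebraMap (esymmSubalgebra σ K) (MvPolynomial σ K)) := by
    rw [Polynomial.lifts_iff_liftsRing, hp, Multiset.prod_X_sub_X_eq_sum_esymm, hcard,
      ← esymm_eq_multiset_esymm]
    refine Subring.sum_mem _ fun j hj => Subring.mul_mem _ (Subring.pow_mem _ (Subring.neg_mem _
      (Subring.one_mem _)) _) (Subring.mul_mem _ ?_ (Subring.pow_mem _ ?_ _))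
    · exact (Polynomial.lifts_iff_liftsRing _ _).1 (Polynomial.C_mem_lifts _
        (⟨esymm σ K j, esymm_mem_esymmSubalgebra (Nat.lt_succ_iff.1 (mem_range.1 hj))⟩ :
          esymmSubalgebra σ K))
    · exact (Polynomial.lifts_iff_liftsRing _ _).1 (Polynomial.X_mem_lifts _)
  obtain ⟨q, hq, -, hqm⟩ := Polynomial.lifts_and_natDegree_eq_and_monic hlifts hmonic
  exact ⟨q, hqm, by rw [Polynomial.eval₂_eq_eval_map, hq, hroot]⟩

instance : Module.Finite (esymmSubalgebra σ K) (MvPolynomial σ K) := by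
  have : Algebra.IsIntegral (esymmSubalgebra σ K) (MvPolynomial σ K) := by
    refine ⟨fun p => ?_⟩
    have hle : Algebra.adjoin K (Set.range (X : σ → MvPolynomial σ K)) ≤
        (integralClosure (esymmSubalgebra σ K) (MvPolynomial σ K)).restrictScalars K :=
      Algebra.adjoin_le (Set.range_subset_iff.2 isIntegral_X_esymmSubalgebra)
    exact hle (by rw [adjoin_range_X]; trivial)
  have : Algebra.FiniteType (esymmSubalgebra σ K) (MvPolynomial σ K) :=
    Algebra.FiniteType.of_restrictScalars_finiteType K _ _
  exact Algebra.IsIntegral.finite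

instance [IsNoetherianRing K] : IsNoetherianRing (esymmSubalgebra σ K) := by
  have : Algebra.FiniteType K (esymmSubalgebra σ K) :=
    (Subalgebra.fg_iff_finiteType _).1 (Subalgebra.fg_def.2 ⟨_, (Set.finite_Icc _ _).image _, rfl⟩)
  exact Algebra.FiniteType.isNoetherianRing K _

end EsymmSubalgebra

theorem Module.Finite.of_range_algebraMap_subset {K R M : Type*} [CommSemiring K] [CommSemiring R]
    [Semiring M] [Algebra K R] [Algebra K M] [Algebra R M] [IsScalarTower K R M]
    [Module.Finite R M] (h : Set.range (algebraMap R M) ⊆ Set.range (algebraMap K M)) :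
    Module.Finite K M := by
  obtain ⟨s, hs⟩ := Module.finite_def.1 ‹Module.Finite R M›
  let T : Submodule R M :=
    { Submodule.span K (s : Set M) with
      smul_mem' := fun r m hm => by
        obtain ⟨c, hc⟩ := h (Set.mem_range_self r)
        rw [Algebra.smul_def, ← hc, ← Algebra.smul_def]
        exact Submodule.smul_mem _ c hm }
  have hspan : Submodule.span R (s : Set M) ≤ T := Submodule.span_le.2 Submodule.subset_span
  exact Module.finite_def.2 ⟨s, eq_top_iff.2 fun m _ => hspan (hs ▸ Submodule.mem_top)⟩

/-- `hR`: every element of `R` lies in `B` and is congruent to a scalar modulo `I`. -/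
theorem finiteDimensional_quotient_of_le_comap_bot {K A : Type*} [Field K] [CommRing A]
    [Algebra K A] (R B : Subalgebra K A) [IsNoetherianRing R] [Module.Finite R A] (I : Ideal B)
    (hR : R ≤ ((⊥ : Subalgebra K (B ⧸ I)).comap (Ideal.Quotient.mkₐ K I)).map B.val) :
    FiniteDimensional K (B ⧸ I) := by
  have hRB : R ≤ B := hR.trans fun _ ⟨x, _, hx⟩ => hx ▸ x.2
  let : Algebra R B := (Subalgebra.inclusion hRB).toAlgebra
  have : IsScalarTower R B A := IsScalarTower.of_algebraMap_eq fun _ => rfl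
  have : IsScalarTower K R B := IsScalarTower.of_algebraMap_eq fun _ => rfl
  have : Module.Finite R B := Module.Finite.of_injective
    (IsScalarTower.toAlgHom R B A).toLinearMap Subtype.val_injective
  have : Module.Finite R (B ⧸ I) := Module.Finite.of_surjective
    (Ideal.Quotient.mkₐ R I).toLinearMap Ideal.Quotient.mk_surjective
  refine Module.Finite.of_range_algebraMap_subset (R := R) ?_
  rintro _ ⟨r, rfl⟩
  obtain ⟨x, hx, hxr⟩ := hR r.2
  obtain ⟨c, hc⟩ := Algebra.mem_bot.1 hx
  exact ⟨c, hc.trans (congrArg (Ideal.Quotient.mk I) (Subtype.ext hxr))⟩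

section YoungSubgroupInvariants

variable {n N : ℕ} {ν : Fin n → ℕ}

lemma symmetricSubalgebra_le_Psub : symmetricSubalgebra (Fin N) ℂ ≤ Psub n N ν :=
  fun _ hp σp _ => hp σp

lemma esymm_mem_Psub (k : ℕ) : esymm (Fin N) ℂ k ∈ Psub n N ν :=
  symmetricSubalgebra_le_Psub ((mem_symmetricSubalgebra _).2 (esymm_isSymmetric _ _ k))

lemma hsymIn_univ_mem_Psub (m : ℕ) : hsymIn univ m ∈ Psub n N ν :=
  hsymIn_univ (τ := Fin N) m ▸
    symmetricSubalgebra_le_Psub ((mem_symmetricSubalgebra _).2 (hsymm_isSymmetric _ _ m))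

lemma kpart_zero : kpart n ν 0 = 0 := by
  simp [kpart]

lemma kpart_self : kpart n ν n = ∑ a, ν a := by
  simp [kpart]

lemma exists_mem_blockOf (hν : ∑ a, ν a = N) (x : Fin N) : ∃ i, x ∈ blockOf n N ν i := by
  classical
  have hex : ∃ t, (x : ℕ) < kpart n ν t := ⟨n, by rw [kpart_self, hν]; exact x.2⟩
  obtain ⟨i, hi⟩ : ∃ i, Nat.find hex = i + 1 :=
    Nat.exists_eq_succ_of_ne_zero fun h => by simpa [h, kpart_zero] using Nat.find_spec hex
  have hin : i < n := by
    have := Nat.find_min' hex (show (x : ℕ) < kpart n ν n by rw [kpart_self, hν]; exact x.2)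
    omega
  have hlow : ¬(x : ℕ) < kpart n ν i := Nat.find_min hex (show i < Nat.find hex by omega)
  have hhigh : (x : ℕ) < kpart n ν (i + 1) := hi ▸ Nat.find_spec hex
  exact ⟨⟨i, hin⟩, mem_filter.2 ⟨mem_univ _, not_lt.1 hlow, hhigh⟩⟩

lemma biUnion_blockOf_eq_univ (hν : ∑ a, ν a = N) : univ.biUnion (blockOf n N ν) = univ :=
  eq_univ_of_forall fun x =>
    mem_biUnion.2 ((exists_mem_blockOf hν x).imp fun i hi => ⟨mem_univ i, hi⟩)

lemma hsymIn_univ_mem_Igen {lam : Fin n → ℕ} (hlamsum : ∑ a, lam a = N) (hν : ∑ a, ν a = N)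
    (hN : 0 < N) {r : ℕ} (hr : 0 < r) : hsymIn univ r ∈ Igen n N lam ν := by
  have hn : 0 < n := Nat.pos_of_ne_zero fun hn => by subst hn; simp at hν; omega
  refine ⟨univ, r, univ_nonempty_iff.2 ⟨⟨0, hn⟩⟩, ?_, by rw [biUnion_blockOf_eq_univ hν]⟩
  rw [card_univ, Fintype.card_fin, filter_true_of_mem fun k _ => k.2, hlamsum, hν]
  omega

lemma esymm_mem_IdealI {lam : Fin n → ℕ} (hlamsum : ∑ a, lam a = N) (hν : ∑ a, ν a = N)
    {k : ℕ} (hk : k ∈ Set.Icc 1 N) :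
    (⟨esymm (Fin N) ℂ k, esymm_mem_Psub k⟩ : Psub n N ν) ∈ IdealI n N lam ν := by
  obtain ⟨hk1, hkN⟩ := hk
  obtain ⟨r, rfl⟩ : ∃ r, k = r + 1 := ⟨k - 1, by omega⟩
  let E (i : ℕ) : Psub n N ν := ⟨esymm (Fin N) ℂ i, esymm_mem_Psub i⟩
  let H (j : ℕ) : Psub n N ν := ⟨hsymIn univ j, hsymIn_univ_mem_Psub j⟩
  have hH (j : ℕ) : H (j + 1) ∈ IdealI n N lam ν :=
    Ideal.subset_span (hsymIn_univ_mem_Igen hlamsum hν (by omega) j.succ_pos)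
  -- in degree `r + 1` of `E(-t) H(t) = 1`, every term but `±e_{r+1}` has a factor `h_j`, `j ≥ 1`
  have hrel : (-1) ^ (r + 1) * E (r + 1) =
      -∑ p ∈ antidiagonal r, (-1) ^ p.1 * E p.1 * H (p.2 + 1) := by
    have h := sum_antidiagonal_esymIn_mul_hsymIn (univ : Finset (Fin N)) r.succ_pos
    rw [Nat.sum_antidiagonal_succ', hsymIn_zero, mul_one] at h
    simp only [esymIn_univ] at h
    apply Subtype.ext
    simp only [E, H]
    push_cast
    linear_combination h
  rw [← Ideal.unit_mul_mem_iff_mem _ (isUnit_neg_one.pow (r + 1)), hrel]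
  exact neg_mem (sum_mem fun p _ => Ideal.mul_mem_left _ _ (hH p.2))

end YoungSubgroupInvariants

theorem C_finiteDimensional
    (lam : Fin n → ℕ)
    (hlamsum : (∑ a, lam a) = N)
    (ν : Fin n → ℕ) (hν : (∑ a, ν a) = N) :
    FiniteDimensional ℂ ((Psub n N ν) ⧸ IdealI n N lam ν) := by
  refine finiteDimensional_quotient_of_le_comap_bot (esymmSubalgebra (Fin N) ℂ) _ _
    (Algebra.adjoin_le ?_)
  rintro _ ⟨k, hk, rfl⟩
  rw [Fintype.card_fin] at hk
  refine ⟨⟨esymm _ _ k, esymm_mem_Psub k⟩, (Subalgebra.mem_comap _ _ _).2 ?_, rfl⟩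
  rw [Ideal.Quotient.mkₐ_eq_mk, Ideal.Quotient.eq_zero_iff_mem.2 (esymm_mem_IdealI hlamsum hν hk)]
  exact zero_mem _

end
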